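/- arXiv:0808.2173 — 3 statements merged into one kernel-verified Lean document; each statement's English description precedes it below -/
import Mathlib

section
/- Let Γ be a bichromatic graph that is locally like W(F4), and let x_1, x_2, x_3, x_4 be four pairwise adjacent short vertices of Γ. Then for every pair of distinct indices i, j, the set of long vertices adjacent to both x_i and x_j has exactly two elements, and these two long vertices are adjacent to each other; moreover, for any three distinct indices i, j, k, no long vertex is adjacent to all of x_i, x_j and x_k. -/
/-- The Weyl graph of type `Bₙ`: vertices `y_{i,j}`, `1 ≤ i,j ≤ n`; distinct vertices
`y_{i,j}`, `y_{k,l}` are adjacent iff `{i,j} ∩ {k,l} = ∅` or `(k,l) = (j,i)`. -/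
def WB (n : ℕ) : SimpleGraph (Fin n × Fin n) where
  Adj p q :=
    p ≠ q ∧ (({p.1, p.2} : Set (Fin n)) ∩ {q.1, q.2} = ∅ ∨ (q.1 = p.2 ∧ q.2 = p.1))
  symm := by
    constructor
    rintro ⟨a, b⟩ ⟨c, d⟩ ⟨hne, h⟩
    refine ⟨hne.symm, ?_⟩
    rcases h with h | ⟨h1, h2⟩
    · left; rw [Set.inter_comm] at h; exact h
    · right; exact ⟨h2.symm, h1.symm⟩
  loopless := by constructor; rintro ⟨a, b⟩ ⟨hne, _⟩; exact hne rfl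

/-- The coloring of `W(Bₙ)`: `y_{i,i}` is short (`true`), `y_{i,j}` with `i ≠ j` is long. -/
def WBcolor (n : ℕ) (p : Fin n × Fin n) : Bool := decide (p.1 = p.2)

/-- The coloring of `W(Cₙ)`: obtained from `W(Bₙ)` by exchanging short and long vertices. -/
def WCcolor (n : ℕ) (p : Fin n × Fin n) : Bool := !(WBcolor n p)

/-- Isomorphism of bichromatic graphs: a graph isomorphism preserving vertex types
(`true` = short, `false` = long). -/
def BIso {V : Type*} {W : Type*} (G : SimpleGraph V) (cG : V → Bool)
    (H : SimpleGraph W) (cH : W → Bool) : Prop :=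
  ∃ e : G ≃g H, ∀ v : V, cH (e v) = cG v

/-- A bichromatic graph is locally like `W(F₄)` if the local graph at every short vertex
is isomorphic to `W(B₃)` and the local graph at every long vertex is isomorphic to `W(C₃)`. -/
def LocallyLikeWF4 {V : Type*} (G : SimpleGraph V) (c : V → Bool) : Prop :=
  ∀ v : V,
    (c v = true → BIso (G.induce (G.neighborSet v)) (fun x => c x.1) (WB 3) (WBcolor 3)) ∧
    (c v = false → BIso (G.induce (G.neighborSet v)) (fun x => c x.1) (WB 3) (WCcolor 3))

/-! In the local graph `W(B₃)` at the short vertex `xᵢ`, each other `xⱼ` is a short vertex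
`y_{a,a}`. The common long neighbours of `xᵢ` and `xⱼ` correspond to the long vertices `y_{b,c}`
of `W(B₃)` with `a ∉ {b, c}`, i.e. `{b, c} = {1, 2, 3} \ {a}`: these are `y_{b,c}` and `y_{c,b}`,
which are adjacent. A long vertex adjacent to two distinct short vertices `y_{a,a}`, `y_{a',a'}`
would need two distinct indices outside `{a, a'}`, and only one is left. -/

lemma WBcolor_eq_true_iff {n : ℕ} {p : Fin n × Fin n} : WBcolor n p = true ↔ p.1 = p.2 := by
  simp [WBcolor]

lemma WBcolor_eq_false_iff {n : ℕ} {p : Fin n × Fin n} : WBcolor n p = false ↔ p.1 ≠ p.2 := by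
  simp [WBcolor]

lemma WBcolor_eq_false_and_WB_adj_diag_iff {n : ℕ} {a : Fin n} {p : Fin n × Fin n} :
    WBcolor n p = false ∧ (WB n).Adj (a, a) p ↔ p.1 ≠ p.2 ∧ p.1 ≠ a ∧ p.2 ≠ a := by
  obtain ⟨i, j⟩ := p
  simp only [WBcolor_eq_false_iff, WB, Set.pair_eq_singleton, Set.singleton_inter_eq_empty]
  grind

lemma WB_three_long_neighbors_of_short {s : Fin 3 × Fin 3} (hs : WBcolor 3 s = true) :
    ∃ u u', (WB 3).Adj u u' ∧ {p | WBcolor 3 p = false ∧ (WB 3).Adj s p} = {u, u'} := by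
  obtain ⟨a, b⟩ := s
  obtain rfl : a = b := WBcolor_eq_true_iff.mp hs
  refine ⟨(a + 1, a + 2), (a + 2, a + 1), ⟨by revert a; decide, Or.inr ⟨rfl, rfl⟩⟩, ?_⟩
  ext p
  simp only [WBcolor_eq_false_and_WB_adj_diag_iff, Set.mem_insert_iff,
    Set.mem_singleton_iff, Prod.ext_iff]
  revert a p; decide

lemma WB_three_not_long_adj_two_short {s t p : Fin 3 × Fin 3} (hs : WBcolor 3 s = true)
    (ht : WBcolor 3 t = true) (hst : s ≠ t) (hp : WBcolor 3 p = false) :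
    ¬ ((WB 3).Adj s p ∧ (WB 3).Adj t p) := by
  obtain ⟨a, b⟩ := s
  obtain ⟨a', b'⟩ := t
  obtain rfl : a = b := WBcolor_eq_true_iff.mp hs
  obtain rfl : a' = b' := WBcolor_eq_true_iff.mp ht
  rintro ⟨hsp, htp⟩
  have hpa := WBcolor_eq_false_and_WB_adj_diag_iff.mp ⟨hp, hsp⟩
  have hpa' := WBcolor_eq_false_and_WB_adj_diag_iff.mp ⟨hp, htp⟩
  have haa' : a ≠ a' := fun h => hst (h ▸ rfl)
  omega

section LocalGraph

variable {V W : Type*} {G : SimpleGraph V} {c : V → Bool} {H : SimpleGraph W} {cH : W → Bool}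
  {v : V} (e : G.induce (G.neighborSet v) ≃g H)

def SimpleGraph.Iso.toLocalEmbedding : H ↪g G :=
  (SimpleGraph.Embedding.induce _).comp e.symm.toEmbedding

@[simp]
lemma SimpleGraph.Iso.toLocalEmbedding_apply (p : W) : e.toLocalEmbedding p = e.symm p := rfl

lemma SimpleGraph.Iso.toLocalEmbedding_image_setOf_adj (he : ∀ y, cH (e y) = c y) {w : V}
    (hw : G.Adj v w) (b : Bool) :
    e.toLocalEmbedding '' {p | cH p = b ∧ H.Adj (e ⟨w, hw⟩) p} =
      {y | c y = b ∧ G.Adj v y ∧ G.Adj w y} := by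
  ext y
  constructor
  · rintro ⟨p, ⟨rfl, hp⟩, rfl⟩
    obtain ⟨⟨z, hz⟩, rfl⟩ := e.surjective p
    simp only [SimpleGraph.Iso.toLocalEmbedding_apply, RelIso.symm_apply_apply, he]
    exact ⟨rfl, hz, e.map_adj_iff.mp hp⟩
  · rintro ⟨rfl, hy, hwy⟩
    exact ⟨e ⟨y, hy⟩, ⟨he _, e.map_adj_iff.mpr hwy⟩, by simp⟩

end LocalGraph

theorem common_long_neighbors_of_short_clique {V : Type} (G : SimpleGraph V) (c : V → Bool)
    (hloc : LocallyLikeWF4 G c) (x : Fin 4 → V)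
    (hshort : ∀ i, c (x i) = true)
    (hadj : ∀ i j, i ≠ j → G.Adj (x i) (x j)) :
    (∀ i j, i ≠ j →
      {y : V | c y = false ∧ G.Adj (x i) y ∧ G.Adj (x j) y}.ncard = 2 ∧
      (∀ y y', y ∈ {y : V | c y = false ∧ G.Adj (x i) y ∧ G.Adj (x j) y} →
        y' ∈ {y : V | c y = false ∧ G.Adj (x i) y ∧ G.Adj (x j) y} → y ≠ y' → G.Adj y y')) ∧
    (∀ i j k, i ≠ j → i ≠ k → j ≠ k →
      ¬ ∃ y : V, c y = false ∧ G.Adj (x i) y ∧ G.Adj (x j) y ∧ G.Adj (x k) y) := by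
  refine ⟨fun i j hij => ?_, fun i j k hij hik hjk => ?_⟩
  · obtain ⟨e, he⟩ := (hloc (x i)).1 (hshort i)
    obtain ⟨u, u', huu', hlong⟩ :=
      WB_three_long_neighbors_of_short ((he _).trans (hshort j) :
        WBcolor 3 (e ⟨x j, hadj i j hij⟩) = true)
    rw [← e.toLocalEmbedding_image_setOf_adj he (hadj i j hij), hlong, Set.image_pair]
    have hadj_uu' : G.Adj (e.toLocalEmbedding u) (e.toLocalEmbedding u') :=
      e.toLocalEmbedding.map_adj_iff.mpr huu'
    exact ⟨Set.ncard_pair hadj_uu'.ne,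
      fun _ _ hy hy' => SimpleGraph.isClique_pair.mpr (fun _ => hadj_uu') hy hy'⟩
  · rintro ⟨y, hy, hiy, hjy, hky⟩
    obtain ⟨e, he⟩ := (hloc (x i)).1 (hshort i)
    have hjk' : e ⟨x j, hadj i j hij⟩ ≠ e ⟨x k, hadj i k hik⟩ :=
      e.injective.ne fun h => (hadj j k hjk).ne (congrArg Subtype.val h)
    exact WB_three_not_long_adj_two_short ((he _).trans (hshort j)) ((he _).trans (hshort k))
      hjk' ((he ⟨y, hiy⟩).trans hy) ⟨e.map_adj_iff.mpr hjy, e.map_adj_iff.mpr hky⟩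
end

section
/- Let Γ be a bichromatic graph that is locally like W(F4), and let Π be the partition of the vertices of Γ into the connected components of the monochromatic induced subgraphs (each such component is a monochromatic 4-clique). For blocks X, Y ∈ Π say X and Y are adjacent if some vertex of X is adjacent in Γ to some vertex of Y, and strongly connected if every vertex of X has a neighbor in Y and every vertex of Y has a neighbor in X. Then any two adjacent blocks have different types (so the contraction Γ/Π is bipartite), and for every block X the number of blocks adjacent to X plus the number of blocks strongly connected to X equals 6. -/
/-- The block (monochromatic connected component) of a vertex `v`. -/
def blockOf {V : Type} (G : SimpleGraph V) (c : V → Bool) (v : V) : Set V :=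
  {w : V | ∃ h : c w = c v, (G.induce {x : V | c x = c v}).Reachable ⟨w, h⟩ ⟨v, rfl⟩}

/-- The partition of the vertices into monochromatic connected components. -/
def blockPartition {V : Type} (G : SimpleGraph V) (c : V → Bool) : Set (Set V) :=
  Set.range (blockOf G c)

/-- Two blocks are adjacent if some vertex of one is adjacent to some vertex of the other. -/
def blockAdj {V : Type} (G : SimpleGraph V) (B B' : Set V) : Prop :=
  B ≠ B' ∧ ∃ a ∈ B, ∃ b ∈ B', G.Adj a b

/-- Two blocks are strongly connected if every vertex of each has a neighbor in the other. -/
def stronglyConn {V : Type} (G : SimpleGraph V) (B B' : Set V) : Prop :=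
  B ≠ B' ∧ (∀ a ∈ B, ∃ b ∈ B', G.Adj a b) ∧ (∀ b ∈ B', ∃ a ∈ B, G.Adj a b)

/-!
Locally, the neighbourhood of a vertex `v` is `W(B₃)` with the same-coloured neighbours on the
diagonal. Reading off `W(B₃)`: the same-coloured neighbours of `v` form a triangle, so the block
`X` of `v` is a 4-clique; and for adjacent `x, x'` in `X` the common neighbours of the other
colour form an edge, hence lie in one block `L(x, x')`. Every block adjacent to `X` is such an
`L(x, x')`, and edges of `X` sharing a vertex get different blocks, so `L` is a proper edge
colouring of `K₄`. A block is strongly connected to `X` exactly when it is `L` of both edges of a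
perfect matching. Each of the three perfect matchings contributes either two adjacent blocks, or
one adjacent and one strongly connected block, giving `6` in total.
-/

open Function Set

theorem WB_adj_iff {n : ℕ} {p q : Fin n × Fin n} :
    (WB n).Adj p q ↔ p ≠ q ∧
      ((p.1 ≠ q.1 ∧ p.1 ≠ q.2 ∧ p.2 ≠ q.1 ∧ p.2 ≠ q.2) ∨ (q.1 = p.2 ∧ q.2 = p.1)) := by
  simp only [WB, ← disjoint_iff_inter_eq_empty, disjoint_insert_left, disjoint_insert_right,
    disjoint_singleton, mem_insert_iff, mem_singleton_iff]
  tauto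

instance (n : ℕ) : DecidableRel (WB n).Adj := fun _ _ => decidable_of_iff _ WB_adj_iff.symm

theorem WB_three_adj_of_diag : ∀ p q : Fin 3 × Fin 3,
    p.1 = p.2 → q.1 = q.2 → p ≠ q → (WB 3).Adj p q := by
  decide

theorem WB_three_exists_diag_adj : ∀ q : Fin 3 × Fin 3,
    q.1 ≠ q.2 → ∃ p : Fin 3 × Fin 3, p.1 = p.2 ∧ (WB 3).Adj p q := by
  decide

theorem WB_three_exists_offDiag_pair : ∀ p : Fin 3 × Fin 3, p.1 = p.2 →
    ∃ q r : Fin 3 × Fin 3, q ≠ r ∧ q.1 ≠ q.2 ∧ r.1 ≠ r.2 ∧ (WB 3).Adj p q ∧ (WB 3).Adj p r := by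
  decide

theorem WB_three_eq_or_adj_iff : ∀ p p' q r : Fin 3 × Fin 3,
    p.1 = p.2 → p'.1 = p'.2 → q.1 ≠ q.2 → r.1 ≠ r.2 → (WB 3).Adj p q → (WB 3).Adj p' r →
      (q = r ∨ (WB 3).Adj q r ↔ p = p') := by
  decide

section ProperEdgeColoring

variable {α : Type*}

/-- `L i j` is the colour of the edge `{i, j}` of `K₄`; the diagonal is ignored. -/
def IsProperEdgeColoring (L : Fin 4 → Fin 4 → α) : Prop :=
  (∀ i j, L i j = L j i) ∧ ∀ i j k, i ≠ j → i ≠ k → j ≠ k → L i j ≠ L i k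

namespace IsProperEdgeColoring

variable {L : Fin 4 → Fin 4 → α}

/- The perfect matchings of `K₄` are `{0, k + 1}` together with its complement, `k : Fin 3`;
`L 0 k.succ` and `![L 2 3, L 1 3, L 1 2] k` are the colours of their two edges. -/

theorem injective_left (hL : IsProperEdgeColoring L) :
    Injective fun k : Fin 3 => L 0 k.succ := fun k k' h => by
  by_contra hkk'
  exact hL.2 0 k.succ k'.succ (Fin.succ_ne_zero k).symm (Fin.succ_ne_zero k').symm
    (Fin.succ_injective _ |>.ne hkk') h

theorem injective_right (hL : IsProperEdgeColoring L) : Injective ![L 2 3, L 1 3, L 1 2] := by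
  obtain ⟨hsymm, hstar⟩ := hL
  intro k k'
  fin_cases k <;> fin_cases k' <;> simp <;> grind

theorem setOf_exists_eq_union (hL : IsProperEdgeColoring L) :
    {Y | ∃ i j, i ≠ j ∧ L i j = Y} =
      range (fun k : Fin 3 => L 0 k.succ) ∪ range ![L 2 3, L 1 3, L 1 2] := by
  obtain ⟨hsymm, -⟩ := hL
  ext Y
  simp [Fin.exists_fin_succ]
  grind

theorem setOf_forall_eq_inter (hL : IsProperEdgeColoring L) :
    {Y | ∀ i, ∃ j, i ≠ j ∧ L i j = Y} =
      range (fun k : Fin 3 => L 0 k.succ) ∩ range ![L 2 3, L 1 3, L 1 2] := by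
  obtain ⟨hsymm, hstar⟩ := hL
  ext Y
  simp [Fin.exists_fin_succ, Fin.forall_fin_succ]
  grind

theorem ncard_add_ncard_eq_six (hL : IsProperEdgeColoring L) :
    {Y | ∃ i j, i ≠ j ∧ L i j = Y}.ncard + {Y | ∀ i, ∃ j, i ≠ j ∧ L i j = Y}.ncard = 6 := by
  rw [hL.setOf_exists_eq_union, hL.setOf_forall_eq_inter,
    ncard_union_add_ncard_inter _ _ (finite_range _) (finite_range _),
    ncard_range_of_injective hL.injective_left, ncard_range_of_injective hL.injective_right,
    Nat.card_eq_fintype_card, Fintype.card_fin]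

theorem exists_disjoint_of_forall (hL : IsProperEdgeColoring L) {Y : α}
    (hY : ∀ i, ∃ j, i ≠ j ∧ L i j = Y) :
    ∃ i j k l, i ≠ j ∧ i ≠ k ∧ i ≠ l ∧ j ≠ k ∧ j ≠ l ∧ k ≠ l ∧ L i j = Y ∧ L k l = Y := by
  obtain ⟨hsymm, hstar⟩ := hL
  obtain ⟨j, h0j, hj⟩ := hY 0
  obtain ⟨k, hk0, hkj⟩ : ∃ k, k ≠ 0 ∧ k ≠ j := (by decide : ∀ j : Fin 4, ∃ k, k ≠ 0 ∧ k ≠ j) j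
  obtain ⟨l, hkl, hl⟩ := hY k
  have hl0 : l ≠ 0 := by
    rintro rfl
    exact hstar 0 j k h0j hk0.symm hkj.symm (by rw [hj, hsymm, hl])
  have hlj : l ≠ j := by
    rintro rfl
    exact hstar l 0 k h0j.symm hkl.symm hk0.symm (by rw [hsymm, hj, hsymm, hl])
  exact ⟨0, j, k, l, h0j, hk0.symm, hl0.symm, hkj.symm, hlj.symm, hkl, hj, hl⟩

end IsProperEdgeColoring

end ProperEdgeColoring

variable {V : Type} {G : SimpleGraph V} {c : V → Bool}

def sameColorNbrs (G : SimpleGraph V) (c : V → Bool) (v : V) : Set V :=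
  {w | G.Adj v w ∧ c w = c v}

def otherColorNbrs (G : SimpleGraph V) (c : V → Bool) (v : V) : Set V :=
  {w | G.Adj v w ∧ c w ≠ c v}

structure LocalChart (G : SimpleGraph V) (c : V → Bool) (v : V) where
  toFun : Fin 3 × Fin 3 → V
  injective : Injective toFun
  adj_center : ∀ p, G.Adj v (toFun p)
  exists_eq : ∀ w, G.Adj v w → ∃ p, toFun p = w
  adj_iff : ∀ p q, G.Adj (toFun p) (toFun q) ↔ (WB 3).Adj p q
  color_eq_iff : ∀ p, c (toFun p) = c v ↔ p.1 = p.2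

namespace LocalChart

variable {v : V}

instance : CoeFun (LocalChart G c v) fun _ => Fin 3 × Fin 3 → V := ⟨toFun⟩

variable (φ : LocalChart G c v)

theorem mem_sameColorNbrs_iff (p : Fin 3 × Fin 3) : φ p ∈ sameColorNbrs G c v ↔ p.1 = p.2 :=
  (and_iff_right (φ.adj_center p)).trans (φ.color_eq_iff p)

theorem mem_otherColorNbrs_iff (p : Fin 3 × Fin 3) : φ p ∈ otherColorNbrs G c v ↔ p.1 ≠ p.2 :=
  (and_iff_right (φ.adj_center p)).trans (φ.color_eq_iff p).not

end LocalChart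

namespace LocallyLikeWF4

theorem nonempty_localChart (hloc : LocallyLikeWF4 G c) (v : V) :
    Nonempty (LocalChart G c v) := by
  obtain ⟨e, he⟩ : ∃ e : G.induce (G.neighborSet v) ≃g WB 3,
      ∀ x, c x.1 = c v ↔ (e x).1 = (e x).2 := by
    cases hv : c v
    · obtain ⟨e, he⟩ := (hloc v).2 hv
      exact ⟨e, fun x => by simp [← he x, WCcolor, WBcolor]⟩
    · obtain ⟨e, he⟩ := (hloc v).1 hv
      exact ⟨e, fun x => by simp [← he x, WBcolor]⟩
  exact ⟨{ toFun := fun p => (e.symm p).1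
           injective := Subtype.val_injective.comp e.symm.injective
           adj_center := fun p => (e.symm p).2
           exists_eq := fun w hw => ⟨e ⟨w, hw⟩, by simp⟩
           adj_iff := fun _ _ => e.symm.map_adj_iff
           color_eq_iff := fun p => by simpa using he (e.symm p) }⟩

variable {v x x' y z : V}

theorem adj_of_mem_sameColorNbrs (hloc : LocallyLikeWF4 G c) (hx : x ∈ sameColorNbrs G c v)
    (hy : y ∈ sameColorNbrs G c v) (hxy : x ≠ y) : G.Adj x y := by
  obtain ⟨φ⟩ := hloc.nonempty_localChart v
  obtain ⟨p, rfl⟩ := φ.exists_eq x hx.1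
  obtain ⟨q, rfl⟩ := φ.exists_eq y hy.1
  rw [φ.mem_sameColorNbrs_iff] at hx hy
  exact (φ.adj_iff p q).2 (WB_three_adj_of_diag p q hx hy (ne_of_apply_ne φ hxy))

theorem exists_mem_sameColorNbrs_adj (hloc : LocallyLikeWF4 G c) (hy : y ∈ otherColorNbrs G c v) :
    ∃ x ∈ sameColorNbrs G c v, G.Adj x y := by
  obtain ⟨φ⟩ := hloc.nonempty_localChart v
  obtain ⟨q, rfl⟩ := φ.exists_eq y hy.1
  obtain ⟨p, hp, hpq⟩ := WB_three_exists_diag_adj q ((φ.mem_otherColorNbrs_iff q).1 hy)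
  exact ⟨φ p, (φ.mem_sameColorNbrs_iff p).2 hp, (φ.adj_iff p q).2 hpq⟩

theorem exists_adj_pair (hloc : LocallyLikeWF4 G c) (hx : x ∈ sameColorNbrs G c v) :
    ∃ y z, y ≠ z ∧ y ∈ otherColorNbrs G c v ∧ z ∈ otherColorNbrs G c v ∧ G.Adj x y ∧ G.Adj x z := by
  obtain ⟨φ⟩ := hloc.nonempty_localChart v
  obtain ⟨p, rfl⟩ := φ.exists_eq x hx.1
  obtain ⟨q, r, hqr, hq, hr, hpq, hpr⟩ :=
    WB_three_exists_offDiag_pair p ((φ.mem_sameColorNbrs_iff p).1 hx)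
  exact ⟨φ q, φ r, φ.injective.ne hqr, (φ.mem_otherColorNbrs_iff q).2 hq,
    (φ.mem_otherColorNbrs_iff r).2 hr, (φ.adj_iff p q).2 hpq, (φ.adj_iff p r).2 hpr⟩

theorem eq_or_adj_iff (hloc : LocallyLikeWF4 G c) (hx : x ∈ sameColorNbrs G c v)
    (hx' : x' ∈ sameColorNbrs G c v) (hy : y ∈ otherColorNbrs G c v) (hz : z ∈ otherColorNbrs G c v)
    (hxy : G.Adj x y) (hx'z : G.Adj x' z) : y = z ∨ G.Adj y z ↔ x = x' := by
  obtain ⟨φ⟩ := hloc.nonempty_localChart v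
  obtain ⟨p, rfl⟩ := φ.exists_eq x hx.1
  obtain ⟨p', rfl⟩ := φ.exists_eq x' hx'.1
  obtain ⟨q, rfl⟩ := φ.exists_eq y hy.1
  obtain ⟨r, rfl⟩ := φ.exists_eq z hz.1
  rw [φ.mem_sameColorNbrs_iff] at hx hx'
  rw [φ.mem_otherColorNbrs_iff] at hy hz
  rw [φ.adj_iff] at hxy hx'z ⊢
  rw [φ.injective.eq_iff, φ.injective.eq_iff]
  exact WB_three_eq_or_adj_iff p p' q r hx hx' hy hz hxy hx'z

theorem exists_injective_range_eq_sameColorNbrs (hloc : LocallyLikeWF4 G c) (v : V) :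
    ∃ x : Fin 3 → V, Injective x ∧ range x = sameColorNbrs G c v := by
  obtain ⟨φ⟩ := hloc.nonempty_localChart v
  refine ⟨fun i => φ (i, i), fun i j h => congrArg Prod.fst (φ.injective h), ?_⟩
  ext w
  constructor
  · rintro ⟨i, rfl⟩
    exact (φ.mem_sameColorNbrs_iff _).2 rfl
  · intro hw
    obtain ⟨p, rfl⟩ := φ.exists_eq w hw.1
    exact ⟨p.1, congrArg φ (Prod.ext rfl ((φ.mem_sameColorNbrs_iff p).1 hw))⟩

end LocallyLikeWF4

section Blocks

variable {v w : V}

theorem mem_blockOf_self (v : V) : v ∈ blockOf G c v :=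
  ⟨rfl, .refl _⟩

theorem color_eq_of_mem_blockOf (h : w ∈ blockOf G c v) : c w = c v :=
  h.1

theorem blockOf_ne_of_color_ne (h : c w ≠ c v) : blockOf G c w ≠ blockOf G c v :=
  fun hb => h (color_eq_of_mem_blockOf (hb ▸ mem_blockOf_self w))

theorem blockOf_subset_of_closed {S : Set V} (hv : v ∈ S)
    (hS : ∀ x ∈ S, ∀ y, G.Adj x y → c y = c v → y ∈ S) : blockOf G c v ⊆ S := by
  rintro w ⟨_, hw⟩
  obtain ⟨p⟩ := hw.symm
  suffices ∀ a b, (G.induce {x | c x = c v}).Walk a b → a.1 ∈ S → b.1 ∈ S from this _ _ p hv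
  intro a b p
  induction p with
  | nil => exact id
  | @cons a b _ h _ ih => exact fun ha => ih (hS _ ha _ h b.2)

namespace LocallyLikeWF4

theorem mem_insert_sameColorNbrs_of_adj (hloc : LocallyLikeWF4 G c) {x y : V}
    (hx : x ∈ insert v (sameColorNbrs G c v)) (hxy : G.Adj x y) (hy : c y = c v) :
    y ∈ insert v (sameColorNbrs G c v) := by
  rcases hx with rfl | hx
  · exact .inr ⟨hxy, hy⟩
  rcases eq_or_ne v y with rfl | hvy
  · exact mem_insert _ _
  exact .inr
    ⟨hloc.adj_of_mem_sameColorNbrs ⟨hx.1.symm, hx.2.symm⟩ ⟨hxy, hy.trans hx.2.symm⟩ hvy, hy⟩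

theorem blockOf_eq_insert (hloc : LocallyLikeWF4 G c) (v : V) :
    blockOf G c v = insert v (sameColorNbrs G c v) := by
  refine (blockOf_subset_of_closed (mem_insert _ _)
    fun _ hx _ => hloc.mem_insert_sameColorNbrs_of_adj hx).antisymm ?_
  rintro w (rfl | hw)
  · exact mem_blockOf_self w
  · exact ⟨hw.2, (SimpleGraph.induce_adj.2 hw.1.symm).reachable⟩

theorem mem_blockOf_comm (hloc : LocallyLikeWF4 G c) (h : w ∈ blockOf G c v) :
    v ∈ blockOf G c w := by
  rw [hloc.blockOf_eq_insert] at h ⊢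
  rcases h with rfl | h
  · exact mem_insert _ _
  · exact .inr ⟨h.1.symm, h.2.symm⟩

theorem blockOf_subset_blockOf (hloc : LocallyLikeWF4 G c) (h : w ∈ blockOf G c v) :
    blockOf G c w ⊆ blockOf G c v :=
  blockOf_subset_of_closed h fun x hx y hxy hy => by
    rw [hloc.blockOf_eq_insert] at hx ⊢
    exact hloc.mem_insert_sameColorNbrs_of_adj hx hxy (hy.trans (color_eq_of_mem_blockOf h))

theorem blockOf_eq_of_mem (hloc : LocallyLikeWF4 G c) (h : w ∈ blockOf G c v) :
    blockOf G c w = blockOf G c v :=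
  (hloc.blockOf_subset_blockOf h).antisymm (hloc.blockOf_subset_blockOf (hloc.mem_blockOf_comm h))

theorem blockOf_eq_blockOf_iff (hloc : LocallyLikeWF4 G c) (hc : c w = c v) :
    blockOf G c v = blockOf G c w ↔ v = w ∨ G.Adj v w := by
  constructor
  · intro h
    have hw : w ∈ insert v (sameColorNbrs G c v) :=
      hloc.blockOf_eq_insert v ▸ h ▸ mem_blockOf_self w
    rcases hw with rfl | hw
    exacts [.inl rfl, .inr hw.1]
  · rintro (rfl | hvw)
    · rfl
    · exact (hloc.blockOf_eq_of_mem ⟨hc, (SimpleGraph.induce_adj.2 hvw.symm).reachable⟩).symm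

theorem color_ne_of_blockAdj (hloc : LocallyLikeWF4 G c) {B B' : Set V}
    (hB : B ∈ blockPartition G c) (hB' : B' ∈ blockPartition G c) (h : blockAdj G B B')
    {a a' : V} (ha : a ∈ B) (ha' : a' ∈ B') : c a ≠ c a' := by
  obtain ⟨v, rfl⟩ := hB
  obtain ⟨v', rfl⟩ := hB'
  obtain ⟨hne, x, hx, w, hw, hxw⟩ := h
  intro hc
  refine hne ?_
  rw [← hloc.blockOf_eq_of_mem hx, ← hloc.blockOf_eq_of_mem hw, hloc.blockOf_eq_blockOf_iff]
  · exact .inr hxw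
  · rw [color_eq_of_mem_blockOf hw, color_eq_of_mem_blockOf hx, ← color_eq_of_mem_blockOf ha,
      ← color_eq_of_mem_blockOf ha', hc]

end LocallyLikeWF4

end Blocks

/-- For adjacent `x, x'` of one colour: the block of their common neighbours of the other colour
(these all lie in one block; taking the union avoids choosing one). -/
def linkBlock (G : SimpleGraph V) (c : V → Bool) (x x' : V) : Set V :=
  {w | ∃ u, G.Adj x u ∧ G.Adj x' u ∧ c u ≠ c x ∧ w ∈ blockOf G c u}

section LinkBlock

variable {x x' x'' u : V}

theorem mem_linkBlock (hxu : G.Adj x u) (hx'u : G.Adj x' u) (hu : c u ≠ c x) :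
    u ∈ linkBlock G c x x' :=
  ⟨u, hxu, hx'u, hu, mem_blockOf_self u⟩

theorem linkBlock_comm (h : c x' = c x) : linkBlock G c x x' = linkBlock G c x' x := by
  ext w
  simp only [linkBlock, mem_ofPred_eq, h]
  exact exists_congr fun u => by tauto

namespace LocallyLikeWF4

theorem linkBlock_eq (hloc : LocallyLikeWF4 G c) (hx' : x' ∈ sameColorNbrs G c x)
    (hu : u ∈ otherColorNbrs G c x) (hx'u : G.Adj x' u) : linkBlock G c x x' = blockOf G c u := by
  ext w
  constructor
  · rintro ⟨u', hxu', hx'u', hu', hw⟩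
    have hc : c u' = c u := (Bool.eq_not_of_ne hu').trans (Bool.eq_not_of_ne hu.2).symm
    rwa [(hloc.blockOf_eq_blockOf_iff hc).2
      ((hloc.eq_or_adj_iff hx' hx' hu ⟨hxu', hu'⟩ hx'u hx'u').2 rfl)]
  · exact fun hw => ⟨u, hu.1, hx'u, hu.2, hw⟩

theorem exists_linkBlock_eq (hloc : LocallyLikeWF4 G c) (hx' : x' ∈ sameColorNbrs G c x) :
    ∃ u ∈ otherColorNbrs G c x, G.Adj x' u ∧ linkBlock G c x x' = blockOf G c u := by
  obtain ⟨u, -, -, hu, -, hx'u, -⟩ := hloc.exists_adj_pair hx'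
  exact ⟨u, hu, hx'u, hloc.linkBlock_eq hx' hu hx'u⟩

theorem exists_linkBlock_eq_of_mem_otherColorNbrs (hloc : LocallyLikeWF4 G c)
    (hu : u ∈ otherColorNbrs G c x) :
    ∃ x' ∈ sameColorNbrs G c x, linkBlock G c x x' = blockOf G c u := by
  obtain ⟨x', hx', hx'u⟩ := hloc.exists_mem_sameColorNbrs_adj hu
  exact ⟨x', hx', hloc.linkBlock_eq hx' hu hx'u⟩

theorem linkBlock_injOn (hloc : LocallyLikeWF4 G c) :
    InjOn (linkBlock G c x) (sameColorNbrs G c x) := by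
  intro x' hx' x'' hx'' h
  obtain ⟨u, hu, hx'u, hL⟩ := hloc.exists_linkBlock_eq hx'
  obtain ⟨u', hu', hx''u', hL'⟩ := hloc.exists_linkBlock_eq hx''
  have hc : c u' = c u := (Bool.eq_not_of_ne hu'.2).trans (Bool.eq_not_of_ne hu.2).symm
  rw [hL, hL', hloc.blockOf_eq_blockOf_iff hc] at h
  exact (hloc.eq_or_adj_iff hx' hx'' hu hu' hx'u hx''u').1 h

theorem eq_of_adj_of_adj (hloc : LocallyLikeWF4 G c) (hx' : x' ∈ sameColorNbrs G c x)
    (hx'' : x'' ∈ sameColorNbrs G c x) (hu : u ∈ otherColorNbrs G c x) (hx'u : G.Adj x' u)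
    (hx''u : G.Adj x'' u) : x' = x'' :=
  (hloc.eq_or_adj_iff hx' hx'' hu hu hx'u hx''u).1 (.inl rfl)

end LocallyLikeWF4

end LinkBlock

namespace LocallyLikeWF4

variable {v x x' : V}

theorem exists_injective_range_eq_blockOf (hloc : LocallyLikeWF4 G c) (v : V) :
    ∃ y : Fin 4 → V, Injective y ∧ range y = blockOf G c v := by
  obtain ⟨x, hx, hrange⟩ := hloc.exists_injective_range_eq_sameColorNbrs v
  refine ⟨Fin.cons v x, Fin.cons_injective_iff.2 ⟨fun hv => ?_, hx⟩, ?_⟩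
  · exact G.loopless.irrefl v (hrange ▸ hv).1
  · rw [Fin.range_cons, hrange, hloc.blockOf_eq_insert]

theorem ncard_blockOf (hloc : LocallyLikeWF4 G c) (v : V) : (blockOf G c v).ncard = 4 := by
  obtain ⟨y, hy, hX⟩ := hloc.exists_injective_range_eq_blockOf v
  rw [← hX, ncard_range_of_injective hy, Nat.card_eq_fintype_card, Fintype.card_fin]

theorem finite_blockOf (hloc : LocallyLikeWF4 G c) (v : V) : (blockOf G c v).Finite := by
  obtain ⟨y, -, hX⟩ := hloc.exists_injective_range_eq_blockOf v
  exact hX ▸ finite_range y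

theorem mem_sameColorNbrs_of_mem_blockOf (hloc : LocallyLikeWF4 G c) (hx : x ∈ blockOf G c v)
    (hx' : x' ∈ blockOf G c v) (h : x ≠ x') : x' ∈ sameColorNbrs G c x := by
  have hc : c x' = c x := (color_eq_of_mem_blockOf hx').trans (color_eq_of_mem_blockOf hx).symm
  refine ⟨((hloc.blockOf_eq_blockOf_iff hc).1 ?_).resolve_left h, hc⟩
  rw [hloc.blockOf_eq_of_mem hx, hloc.blockOf_eq_of_mem hx']

section Enumeration

variable {y : Fin 4 → V} {i j : Fin 4}

theorem mem_sameColorNbrs_of_ne (hloc : LocallyLikeWF4 G c) (hy : Injective y)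
    (hX : range y = blockOf G c v) (hij : i ≠ j) : y j ∈ sameColorNbrs G c (y i) :=
  hloc.mem_sameColorNbrs_of_mem_blockOf (hX ▸ mem_range_self i) (hX ▸ mem_range_self j) (hy.ne hij)

theorem isProperEdgeColoring_linkBlock (hloc : LocallyLikeWF4 G c) (hy : Injective y)
    (hX : range y = blockOf G c v) : IsProperEdgeColoring fun i j => linkBlock G c (y i) (y j) := by
  refine ⟨fun i j => ?_, fun i j k hij hik hjk h => hjk (hy (hloc.linkBlock_injOn
    (hloc.mem_sameColorNbrs_of_ne hy hX hij) (hloc.mem_sameColorNbrs_of_ne hy hX hik) h))⟩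
  rcases eq_or_ne i j with rfl | hij
  · rfl
  · exact linkBlock_comm (hloc.mem_sameColorNbrs_of_ne hy hX hij).2

theorem exists_linkBlock_eq_of_adj (hloc : LocallyLikeWF4 G c)
    (hX : range y = blockOf G c v) {w : V} (hw : blockOf G c w ≠ blockOf G c v)
    (h : G.Adj (y i) w) : ∃ j, i ≠ j ∧ linkBlock G c (y i) (y j) = blockOf G c w := by
  have hi : y i ∈ blockOf G c v := hX ▸ mem_range_self i
  have hc : c w ≠ c (y i) := fun hc =>
    hw (((hloc.blockOf_eq_blockOf_iff hc).2 (.inr h)).symm.trans (hloc.blockOf_eq_of_mem hi))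
  obtain ⟨x', hx', hL⟩ := hloc.exists_linkBlock_eq_of_mem_otherColorNbrs ⟨h, hc⟩
  obtain ⟨j, rfl⟩ : x' ∈ range y := by
    rw [hX, ← hloc.blockOf_eq_of_mem hi, hloc.blockOf_eq_insert]
    exact .inr hx'
  exact ⟨j, fun hij => G.ne_of_adj hx'.1 (congrArg y hij), hL⟩

theorem exists_adj_linkBlock_eq (hloc : LocallyLikeWF4 G c) (hy : Injective y)
    (hX : range y = blockOf G c v) (hij : i ≠ j) :
    ∃ u, G.Adj (y i) u ∧ blockOf G c u ≠ blockOf G c v ∧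
      linkBlock G c (y i) (y j) = blockOf G c u := by
  obtain ⟨u, hu, -, hL⟩ := hloc.exists_linkBlock_eq (hloc.mem_sameColorNbrs_of_ne hy hX hij)
  refine ⟨u, hu.1, ?_, hL⟩
  rw [← hloc.blockOf_eq_of_mem (hX ▸ mem_range_self i : y i ∈ blockOf G c v)]
  exact blockOf_ne_of_color_ne hu.2

theorem setOf_blockAdj_eq (hloc : LocallyLikeWF4 G c) (hy : Injective y)
    (hX : range y = blockOf G c v) :
    {B' ∈ blockPartition G c | blockAdj G (blockOf G c v) B'} =
      {Y | ∃ i j, i ≠ j ∧ linkBlock G c (y i) (y j) = Y} := by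
  ext Y
  constructor
  · rintro ⟨⟨u, rfl⟩, hne, a, ha, w, hw, haw⟩
    rw [← hX] at ha
    obtain ⟨i, rfl⟩ := ha
    rw [← hloc.blockOf_eq_of_mem hw] at hne ⊢
    obtain ⟨j, hij, hL⟩ := hloc.exists_linkBlock_eq_of_adj hX (Ne.symm hne) haw
    exact ⟨i, j, hij, hL⟩
  · rintro ⟨i, j, hij, rfl⟩
    obtain ⟨u, hiu, hne, hL⟩ := hloc.exists_adj_linkBlock_eq hy hX hij
    rw [hL]
    exact ⟨⟨u, rfl⟩, hne.symm, y i, hX ▸ mem_range_self i, u, mem_blockOf_self u, hiu⟩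

/-- The block has only four vertices, so it consists of the two pairs of common neighbours of the
ends of the two edges. -/
theorem forall_exists_adj_of_linkBlock_eq (hloc : LocallyLikeWF4 G c) (hy : Injective y)
    (hX : range y = blockOf G c v) {k l : Fin 4} (hij : i ≠ j) (hik : i ≠ k) (hjk : j ≠ k)
    (hkl : k ≠ l) (h : linkBlock G c (y i) (y j) = linkBlock G c (y k) (y l)) :
    ∀ w ∈ linkBlock G c (y i) (y j), ∃ a ∈ blockOf G c v, G.Adj a w := by
  have hsame {i j : Fin 4} (hij : i ≠ j) := hloc.mem_sameColorNbrs_of_ne hy hX hij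
  obtain ⟨u, u', huu', hu, hu', hju, hju'⟩ := hloc.exists_adj_pair (hsame hij)
  obtain ⟨z, z', hzz', hz, hz', hlz, hlz'⟩ := hloc.exists_adj_pair (hsame hkl)
  have hne {s t : V} (hs : s ∈ otherColorNbrs G c (y i)) (hjs : G.Adj (y j) s)
      (ht : G.Adj (y k) t) : s ≠ t := fun hst =>
    hjk (hy (hloc.eq_of_adj_of_adj (hsame hij) (hsame hik) hs hjs (hst ▸ ht)))
  have hsub : ({u, u', z, z'} : Set V) ⊆ linkBlock G c (y i) (y j) := by
    rintro t (rfl | rfl | rfl | rfl)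
    · exact mem_linkBlock hu.1 hju hu.2
    · exact mem_linkBlock hu'.1 hju' hu'.2
    · exact h ▸ mem_linkBlock hz.1 hlz hz.2
    · exact h ▸ mem_linkBlock hz'.1 hlz' hz'.2
  have hcard : ({u, u', z, z'} : Set V).ncard = 4 := by
    rw [ncard_insert_of_notMem, ncard_insert_of_notMem, ncard_pair hzz']
    · simp only [mem_insert_iff, mem_singleton_iff, not_or]
      exact ⟨hne hu' hju' hz.1, hne hu' hju' hz'.1⟩
    · simp only [mem_insert_iff, mem_singleton_iff, not_or]
      exact ⟨huu', hne hu hju hz.1, hne hu hju hz'.1⟩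
  have hL := hloc.linkBlock_eq (hsame hij) hu hju
  have hY := eq_of_subset_of_ncard_le hsub (by rw [hL, hloc.ncard_blockOf, hcard])
    (hL ▸ hloc.finite_blockOf u)
  have hi : y i ∈ blockOf G c v := hX ▸ mem_range_self i
  have hk : y k ∈ blockOf G c v := hX ▸ mem_range_self k
  rw [← hY]
  rintro w (rfl | rfl | rfl | rfl)
  exacts [⟨y i, hi, hu.1⟩, ⟨y i, hi, hu'.1⟩, ⟨y k, hk, hz.1⟩, ⟨y k, hk, hz'.1⟩]

theorem setOf_stronglyConn_eq (hloc : LocallyLikeWF4 G c) (hy : Injective y)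
    (hX : range y = blockOf G c v) :
    {B' ∈ blockPartition G c | stronglyConn G (blockOf G c v) B'} =
      {Y | ∀ i, ∃ j, i ≠ j ∧ linkBlock G c (y i) (y j) = Y} := by
  ext Y
  constructor
  · rintro ⟨⟨u, rfl⟩, hne, hXY, -⟩ i
    obtain ⟨w, hw, hiw⟩ := hXY (y i) (hX ▸ mem_range_self i)
    rw [← hloc.blockOf_eq_of_mem hw] at hne ⊢
    exact hloc.exists_linkBlock_eq_of_adj hX (Ne.symm hne) hiw
  · intro hY
    obtain ⟨i, j, k, l, hij, hik, -, hjk, -, hkl, rfl, hkl'⟩ :=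
      (hloc.isProperEdgeColoring_linkBlock hy hX).exists_disjoint_of_forall hY
    obtain ⟨u, -, hne, hL⟩ := hloc.exists_adj_linkBlock_eq hy hX hij
    refine ⟨⟨u, hL.symm⟩, hL ▸ hne.symm, fun a ha => ?_,
      hloc.forall_exists_adj_of_linkBlock_eq hy hX hij hik hjk hkl hkl'.symm⟩
    rw [← hX] at ha
    obtain ⟨m, rfl⟩ := ha
    obtain ⟨n, hmn, hn⟩ := hY m
    obtain ⟨w, hw, hnw, -⟩ := hloc.exists_linkBlock_eq (hloc.mem_sameColorNbrs_of_ne hy hX hmn)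
    exact ⟨w, hn ▸ mem_linkBlock hw.1 hnw hw.2, hw.1⟩

end Enumeration

end LocallyLikeWF4

theorem contraction_bipartite_of_bivalency_six {V : Type} (G : SimpleGraph V) (c : V → Bool)
    (hloc : LocallyLikeWF4 G c) :
    (∀ B ∈ blockPartition G c, ∀ B' ∈ blockPartition G c, blockAdj G B B' →
      ∀ a ∈ B, ∀ a' ∈ B', c a ≠ c a') ∧
    (∀ B ∈ blockPartition G c,
      {B' ∈ blockPartition G c | blockAdj G B B'}.ncard +
      {B' ∈ blockPartition G c | stronglyConn G B B'}.ncard = 6) := by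
  refine ⟨fun B hB B' hB' h a ha a' ha' => hloc.color_ne_of_blockAdj hB hB' h ha ha', ?_⟩
  rintro _ ⟨v, rfl⟩
  obtain ⟨y, hy, hX⟩ := hloc.exists_injective_range_eq_blockOf v
  rw [hloc.setOf_blockAdj_eq hy hX, hloc.setOf_stronglyConn_eq hy hX]
  exact (hloc.isProperEdgeColoring_linkBlock hy hX).ncard_add_ncard_eq_six
end

section
/- For every natural number N there exists a finite connected bichromatic graph Γ that is locally like W(B_4) and has more than N vertices; in particular, there exist infinitely many pairwise non-isomorphic finite connected bichromatic graphs that are locally like W(B_4). -/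
/-- The vertex `y_{1,1}` of `WB n`, a short vertex. -/
def shortWBvertex (n : ℕ) (hn : 2 ≤ n) : Fin n × Fin n := (⟨0, by omega⟩, ⟨0, by omega⟩)

/-- The vertex `y_{1,2}` of `WB n`, a long vertex. -/
def longWBvertex (n : ℕ) (hn : 2 ≤ n) : Fin n × Fin n := (⟨0, by omega⟩, ⟨1, by omega⟩)

/-- A bichromatic graph is locally like `W(Bₙ)` if the local graph at every short vertex is
isomorphic (as a bichromatic graph) to the local graph of `W(Bₙ)` at `y_{1,1}` and the local
graph at every long vertex is isomorphic to the local graph of `W(Bₙ)` at `y_{1,2}`. -/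
def LocallyLikeWBn {V : Type*} (G : SimpleGraph V) (c : V → Bool) (n : ℕ) (hn : 2 ≤ n) : Prop :=
  ∀ v : V,
    (c v = true → BIso (G.induce (G.neighborSet v)) (fun x => c x.1)
      ((WB n).induce ((WB n).neighborSet (shortWBvertex n hn))) (fun x => WBcolor n x.1)) ∧
    (c v = false → BIso (G.induce (G.neighborSet v)) (fun x => c x.1)
      ((WB n).induce ((WB n).neighborSet (longWBvertex n hn))) (fun x => WBcolor n x.1))

/-!
Take the `ℤ/m`-voltage cover of `W(B₄)` itself, with voltage `±1` exactly on the edges between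
`{y₁₂, y₂₁}` and `{y₃₄, y₄₃}`. A triangle through such an edge has the shape `{y_ij, y_ji, y_kl}`,
so it contains two of them, with cancelling orientations: the voltage sums to zero around every
triangle. Hence each local graph of the cover is a copy of a local graph of `W(B₄)`, and since
`Sym(4)` acts transitively on the vertices of each type the cover is locally like `W(B₄)`. The
closed walk `y₁₁, y₃₃, y₁₂, y₃₄, y₁₁` has voltage `1`, so the cover is connected; it has `16 m`
vertices.
-/

namespace BIso

variable {U V W : Type*} {G : SimpleGraph U} {H : SimpleGraph V} {K : SimpleGraph W}
  {cG : U → Bool} {cH : V → Bool} {cK : W → Bool}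

theorem symm (h : BIso G cG H cH) : BIso H cH G cG := by
  obtain ⟨e, he⟩ := h
  exact ⟨e.symm, fun w => by simpa using (he (e.symm w)).symm⟩

theorem trans (h₁ : BIso G cG H cH) (h₂ : BIso H cH K cK) : BIso G cG K cK := by
  obtain ⟨e, he⟩ := h₁
  obtain ⟨f, hf⟩ := h₂
  exact ⟨e.trans f, fun v => (hf (e v)).trans (he v)⟩

theorem natCard_eq (h : BIso G cG H cH) : Nat.card U = Nat.card V :=
  let ⟨e, _⟩ := h
  Nat.card_congr e.toEquiv

theorem induce_neighborSet (e : G ≃g H) (he : ∀ u, cH (e u) = cG u) (u : U) :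
    BIso (G.induce (G.neighborSet u)) (fun x => cG x.1)
      (H.induce (H.neighborSet (e u))) (fun x => cH x.1) :=
  ⟨⟨e.toEquiv.subtypeEquiv fun _ => e.map_adj_iff.symm, e.map_adj_iff⟩, fun x => he x.1⟩

end BIso

namespace WB

variable {n : ℕ}

theorem adj_iff (p q : Fin n × Fin n) :
    (WB n).Adj p q ↔ p ≠ q ∧ ((p.1 ≠ q.1 ∧ p.1 ≠ q.2 ∧ p.2 ≠ q.1 ∧ p.2 ≠ q.2) ∨
      (q.1 = p.2 ∧ q.2 = p.1)) := by
  simp only [WB, ← Set.disjoint_iff_inter_eq_empty, Set.disjoint_insert_left,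
    Set.disjoint_insert_right, Set.disjoint_singleton_left, Set.mem_insert_iff,
    Set.mem_singleton_iff]
  tauto

instance : DecidableRel (WB n).Adj := fun p q => decidable_of_iff' _ (adj_iff p q)

def permIso (σ : Equiv.Perm (Fin n)) : WB n ≃g WB n where
  toEquiv := σ.prodCongr σ
  map_rel_iff' {p q} := by
    simp only [Equiv.prodCongr_apply, adj_iff, Prod.map, ne_eq, Prod.ext_iff,
      EmbeddingLike.apply_eq_iff_eq]

theorem WBcolor_permIso (σ : Equiv.Perm (Fin n)) (p : Fin n × Fin n) :
    WBcolor n (permIso σ p) = WBcolor n p := by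
  simp [permIso, WBcolor]

theorem adj_diag {i : Fin n} {p : Fin n × Fin n} (h₁ : i ≠ p.1) (h₂ : i ≠ p.2) :
    (WB n).Adj (i, i) p :=
  (adj_iff _ _).2 ⟨fun h => h₁ (congrArg Prod.fst h), Or.inl ⟨h₁, h₂, h₁, h₂⟩⟩

theorem connected (hn : 3 ≤ n) : (WB n).Connected := by
  let i₀ : Fin n := ⟨0, by omega⟩
  refine (SimpleGraph.connected_iff_exists_forall_reachable _).2 ⟨(i₀, i₀), fun p => ?_⟩
  obtain ⟨i, hi₁, hi₂⟩ := Fin.exists_ne_and_ne_of_two_lt p.1 p.2 hn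
  have hp : (WB n).Reachable (i, i) p := (adj_diag hi₁ hi₂).reachable
  rcases eq_or_ne i₀ i with rfl | hi
  · exact hp
  · exact (adj_diag (p := (i, i)) hi hi).reachable.trans hp

theorem exists_permIso_shortWBvertex (hn : 2 ≤ n) {v : Fin n × Fin n} (hv : v.1 = v.2) :
    ∃ σ, permIso σ (shortWBvertex n hn) = v :=
  ⟨Equiv.swap _ v.1, Prod.ext (Equiv.swap_apply_left _ _) (hv ▸ Equiv.swap_apply_left _ _)⟩

theorem exists_permIso_longWBvertex (hn : 2 ≤ n) {v : Fin n × Fin n} (hv : v.1 ≠ v.2) :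
    ∃ σ, permIso σ (longWBvertex n hn) = v := by
  let i : Fin n := ⟨0, by omega⟩
  let j : Fin n := ⟨1, by omega⟩
  let τ := Equiv.swap i v.1
  have hτ : τ v.2 ≠ i := fun h => hv <| by
    rw [Equiv.swap_apply_eq_iff, Equiv.swap_apply_left] at h
    exact h.symm
  have hij : i ≠ j := by simp [i, j, Fin.ext_iff]
  refine ⟨(Equiv.swap j (τ v.2)).trans τ, Prod.ext ?_ ?_⟩
  · change τ (Equiv.swap j (τ v.2) i) = v.1
    rw [Equiv.swap_apply_of_ne_of_ne hij hτ.symm, Equiv.swap_apply_left]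
  · change τ (Equiv.swap j (τ v.2) j) = v.2
    rw [Equiv.swap_apply_left, Equiv.swap_apply_self]

end WB

theorem locallyLikeWBn_of_forall_biso {V : Type*} {G : SimpleGraph V} {c : V → Bool} {n : ℕ}
    (hn : 2 ≤ n) (h : ∀ v, ∃ w, WBcolor n w = c v ∧
      BIso (G.induce (G.neighborSet v)) (fun x => c x.1)
        ((WB n).induce ((WB n).neighborSet w)) (fun x => WBcolor n x.1)) :
    LocallyLikeWBn G c n hn := by
  intro v
  obtain ⟨w, hw, hvw⟩ := h v
  have key : ∀ b, (∃ σ, WB.permIso σ b = w) →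
      BIso (G.induce (G.neighborSet v)) (fun x => c x.1)
        ((WB n).induce ((WB n).neighborSet b)) (fun x => WBcolor n x.1) := by
    rintro b ⟨σ, rfl⟩
    exact hvw.trans (BIso.induce_neighborSet _ (WB.WBcolor_permIso σ) b).symm
  exact ⟨fun hv => key _ (WB.exists_permIso_shortWBvertex hn (by simpa [WBcolor, hv] using hw)),
    fun hv => key _ (WB.exists_permIso_longWBvertex hn (by simpa [WBcolor, hv] using hw))⟩

namespace SimpleGraph

variable {V A : Type*} [AddGroup A]

def voltageCover (G : SimpleGraph V) (f : V → V → A) (hf : ∀ v w, f w v = -f v w) :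
    SimpleGraph (V × A) where
  Adj p q := G.Adj p.1 q.1 ∧ q.2 = p.2 + f p.1 q.1
  symm := ⟨fun _ _ ⟨h, hq⟩ => ⟨h.symm, by rw [hf, hq, add_neg_cancel_right]⟩⟩
  loopless := ⟨fun p ⟨h, _⟩ => G.loopless.irrefl p.1 h⟩

variable {G : SimpleGraph V} {f : V → V → A} {hf : ∀ v w, f w v = -f v w}

theorem voltageCover_reachable_of_adj {v w : V} (h : G.Adj v w) (a : A) :
    (G.voltageCover f hf).Reachable (v, a) (w, a + f v w) :=
  Adj.reachable ⟨h, rfl⟩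

theorem exists_voltageCover_reachable {v w : V} (h : G.Reachable v w) (a : A) :
    ∃ b, (G.voltageCover f hf).Reachable (v, a) (w, b) := by
  obtain ⟨p⟩ := h
  induction p generalizing a with
  | nil => exact ⟨a, .rfl⟩
  | cons hadj _ ih =>
    obtain ⟨b, hb⟩ := ih (a + f _ _)
    exact ⟨b, (voltageCover_reachable_of_adj hadj a).trans hb⟩

theorem biso_voltageCover_induce_neighborSet
    (hcocycle : ∀ u v w, G.Adj u v → G.Adj v w → G.Adj u w → f u w = f u v + f v w)
    (c : V → Bool) (v : V) (a : A) :
    BIso ((G.voltageCover f hf).induce ((G.voltageCover f hf).neighborSet (v, a)))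
      (fun x => c x.1.1) (G.induce (G.neighborSet v)) (fun x => c x.1) := by
  refine ⟨⟨⟨fun x => ⟨x.1.1, x.2.1⟩, fun y => ⟨(y.1, a + f v y.1), y.2, rfl⟩, ?_, fun _ => rfl⟩,
    fun {x y} => ⟨fun h => ⟨h, ?_⟩, fun h => h.1⟩⟩, fun _ => rfl⟩
  · rintro ⟨⟨w, b⟩, hw⟩
    exact Subtype.ext (Prod.ext rfl hw.2.symm)
  · obtain ⟨hx, hxa⟩ := x.2
    obtain ⟨hy, hya⟩ := y.2
    simp only [Function.Embedding.coe_subtype]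
    rw [hya, hxa, add_assoc]
    exact congrArg _ (hcocycle _ _ _ hx h hy)

theorem voltageCover_connected_of_reachable_add_one {m : ℕ} {f : V → V → ZMod m}
    {hf : ∀ v w, f w v = -f v w} (hG : G.Connected) (v : V)
    (hv : ∀ a, (G.voltageCover f hf).Reachable (v, a) (v, a + 1)) :
    (G.voltageCover f hf).Connected := by
  have hfiber : ∀ k : ℤ, (G.voltageCover f hf).Reachable (v, 0) (v, k) := by
    intro k
    induction k using Int.induction_on with
    | zero => simp
    | succ k ih =>
      rw [Int.cast_add, Int.cast_one]
      exact ih.trans (hv _)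
    | pred k ih =>
      have h := (hv (((-k : ℤ) : ZMod m) - 1)).symm
      rw [sub_add_cancel] at h
      rw [Int.cast_sub, Int.cast_one]
      exact ih.trans h
  refine (connected_iff_exists_forall_reachable _).2 ⟨(v, 0), fun ⟨w, b⟩ => ?_⟩
  obtain ⟨c, hc⟩ := exists_voltageCover_reachable (hG.preconnected w v) b
  obtain ⟨k, rfl⟩ := ZMod.intCast_surjective c
  exact (hfiber k).trans hc.symm

end SimpleGraph

open SimpleGraph

def wbVoltage (p q : Fin 4 × Fin 4) : ℤ :=
  (if (p = (0, 1) ∨ p = (1, 0)) ∧ (q = (2, 3) ∨ q = (3, 2)) then 1 else 0) -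
  (if (q = (0, 1) ∨ q = (1, 0)) ∧ (p = (2, 3) ∨ p = (3, 2)) then 1 else 0)

theorem wbVoltage_swap (p q : Fin 4 × Fin 4) : wbVoltage q p = -wbVoltage p q := by
  unfold wbVoltage
  ring

theorem wbVoltage_cocycle : ∀ p q r : Fin 4 × Fin 4, (WB 4).Adj p q → (WB 4).Adj q r →
    (WB 4).Adj p r → wbVoltage p r = wbVoltage p q + wbVoltage q r := by
  decide

def coverWB4 (m : ℕ) : SimpleGraph ((Fin 4 × Fin 4) × ZMod m) :=
  (WB 4).voltageCover (fun p q => (wbVoltage p q : ZMod m)) fun p q => by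
    rw [wbVoltage_swap, Int.cast_neg]

theorem coverWB4_locallyLikeWBn (m : ℕ) :
    LocallyLikeWBn (coverWB4 m) (fun p => WBcolor 4 p.1) 4 (by decide) :=
  locallyLikeWBn_of_forall_biso _ fun ⟨v, a⟩ => ⟨v, rfl,
    biso_voltageCover_induce_neighborSet (fun p q r hpq hqr hpr => by
      rw [wbVoltage_cocycle p q r hpq hqr hpr, Int.cast_add]) _ v a⟩

theorem coverWB4_reachable_add_one (m : ℕ) (a : ZMod m) :
    (coverWB4 m).Reachable ((0, 0), a) ((0, 0), a + 1) := by
  have step {p q : Fin 4 × Fin 4} (h : (WB 4).Adj p q) (b : ZMod m) :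
      (coverWB4 m).Reachable (p, b) (q, b + wbVoltage p q) :=
    voltageCover_reachable_of_adj h b
  have h := (step (p := (0, 0)) (q := (2, 2)) (by decide) a).trans <|
    (step (q := (0, 1)) (by decide) _).trans <|
    (step (q := (2, 3)) (by decide) _).trans (step (q := (0, 0)) (by decide) _)
  simpa [wbVoltage] using h

theorem coverWB4_connected (m : ℕ) : (coverWB4 m).Connected :=
  voltageCover_connected_of_reachable_add_one (WB.connected (by norm_num)) _
    (coverWB4_reachable_add_one m)

theorem natCard_coverWB4 (m : ℕ) [NeZero m] : Nat.card ((Fin 4 × Fin 4) × ZMod m) = 16 * m := by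
  simp [Nat.card_eq_fintype_card, ZMod.card]

theorem infinitely_many_locally_WB4 :
    (∀ N : ℕ, ∃ (V : Type) (G : SimpleGraph V) (c : V → Bool),
      Finite V ∧ G.Connected ∧ LocallyLikeWBn G c 4 (by omega) ∧ N < Nat.card V) ∧
    ∃ (V : ℕ → Type) (G : ∀ i, SimpleGraph (V i)) (c : ∀ i, V i → Bool),
      (∀ i, Finite (V i) ∧ (G i).Connected ∧ LocallyLikeWBn (G i) (c i) 4 (by omega)) ∧
      ∀ i j, i ≠ j → ¬ BIso (G i) (c i) (G j) (c j) := by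
  refine ⟨fun N => ⟨_, coverWB4 (N + 1), _, inferInstance, coverWB4_connected _,
      coverWB4_locallyLikeWBn _, by rw [natCard_coverWB4]; omega⟩,
    _, fun i => coverWB4 (i + 1), _,
    fun i => ⟨inferInstance, coverWB4_connected _, coverWB4_locallyLikeWBn _⟩,
    fun i j hij h => hij ?_⟩
  have hcard := h.natCard_eq
  rw [natCard_coverWB4, natCard_coverWB4] at hcard
  omega
end
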